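/- Let Γ be a finite set of formulas and α a formula. Then α is an algebraic consequence of Γ (Γ ⊨_Alg α) if and only if Γ ⊨_BT α, i.e. for every homomorphism h from formulas into the fixed three-element HT-algebra BT with h(γ)=1 for all γ ∈ Γ, one has h(α)=1. Consequently the consequence relation is decidable. -/

import Mathlib

/-- A HT-algebra: a Heyting algebra with unary operations `S 0` (= S₁), `S 1` (= S₂)
satisfying (HT2)–(HT7).  (Note: in a Heyting algebra, ¬a = a ⇨ ⊥ = aᶜ.) -/
structure HTAlgebra (A : Type*) [HeytingAlgebra A] where
  S : Fin 2 → A → A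
  /-- (HT2) each Sᵢ preserves ∧ -/
  S_inf : ∀ i a b, S i (a ⊓ b) = S i a ⊓ S i b
  /-- (HT2) each Sᵢ preserves ∨ -/
  S_sup : ∀ i a b, S i (a ⊔ b) = S i a ⊔ S i b
  /-- (HT3) S₂(a ⇒ b) = S₂a ⇒ S₂b -/
  S2_himp : ∀ a b, S 1 (a ⇨ b) = S 1 a ⇨ S 1 b
  /-- (HT4) S₁(a ⇒ b) = (S₁a ⇒ S₁b) ∧ (S₂a ⇒ S₂b) -/
  S1_himp : ∀ a b, S 0 (a ⇨ b) = (S 0 a ⇨ S 0 b) ⊓ (S 1 a ⇨ S 1 b)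
  /-- (HT5) SᵢSⱼa = Sⱼa -/
  S_S : ∀ i j a, S i (S j a) = S j a
  /-- (HT6) S₁a ∨ a = a -/
  S1_sup_self : ∀ a, S 0 a ⊔ a = a
  /-- (HT7) S₁a ∨ ¬S₁a = 1 -/
  S1_lem : ∀ a, S 0 a ⊔ (S 0 a)ᶜ = ⊤

/-- Formulas: propositional variables (indexed by ℕ) combined with
∧, ∨, ⇒, ¬ and the unary connectives S₁ (= S 0), S₂ (= S 1). -/
inductive Fml : Type
  | var : ℕ → Fml
  | and : Fml → Fml → Fml
  | or : Fml → Fml → Fml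
  | imp : Fml → Fml → Fml
  | neg : Fml → Fml
  | S : Fin 2 → Fml → Fml

/-- A homomorphism from formulas into a HT-algebra: a map preserving
∧, ∨, ⇒, ¬, S₁, S₂. -/
def IsHom {A : Type*} [HeytingAlgebra A] (H : HTAlgebra A) (h : Fml → A) : Prop :=
  (∀ α β, h (.and α β) = h α ⊓ h β) ∧
  (∀ α β, h (.or α β) = h α ⊔ h β) ∧
  (∀ α β, h (.imp α β) = h α ⇨ h β) ∧
  (∀ α, h (.neg α) = (h α)ᶜ) ∧
  (∀ (i : Fin 2) α, h (.S i α) = H.S i (h α))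

/-- α is an algebraic consequence of Γ: in every algebraic model (A, h) in
which all formulas of Γ are true (h(γ) = 1), α is true (h(α) = 1). -/
def AlgConsequence (Γ : Set Fml) (α : Fml) : Prop :=
  ∀ (A : Type) (_ : HeytingAlgebra A) (H : HTAlgebra A) (h : Fml → A),
    IsHom H h → (∀ γ ∈ Γ, h γ = ⊤) → h α = ⊤

/-- The basic three-element HT-algebra BT, carried by the three-element
chain 0 < 1 < 2 (with its linear-order Heyting implication):
S₁0 = S₁1 = 0, S₁2 = 2 and S₂0 = 0, S₂1 = S₂2 = 2. -/
noncomputable def BT : HTAlgebra (Fin 3) where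
  S := fun i x => if i = 0 then (if x = 2 then 2 else 0) else (if x = 0 then 0 else 2)
  S_inf := by decide
  S_sup := by decide
  S2_himp := by decide
  S1_himp := by decide
  S_S := by decide
  S1_sup_self := by decide
  S1_lem := by decide

/-!
Every HT-algebra is separated by homomorphisms into `BT`. Given `a ≠ ⊤`, the prime ideal
theorem gives a prime pair `(I, F)` with `S₁ a ∈ I`. The elements `Sᵢ x` are complemented
(HT5, HT7), so on them `F` acts as a two-valued valuation, and the truth values of `S₁ x ∈ F`
("here") and `S₂ x ∈ F` ("there"), the first implying the second, pick out an element of the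
chain `0 < b < 1`. By (HT2)–(HT5) this is a Heyting homomorphism into `BT` commuting with
`S₁, S₂`, and it sends `a` below `⊤`; composing an algebraic countermodel with it gives a
countermodel in `BT`.
-/

open Order

namespace Order.Ideal.PrimePair

section Lattice

variable {P : Type*} [Lattice P] (IF : PrimePair P) {x y : P}

theorem mem_F_iff_notMem_I : x ∈ IF.F ↔ x ∉ IF.I := by
  rw [← SetLike.mem_coe, ← IF.compl_I_eq_F, Set.mem_compl_iff, SetLike.mem_coe]

theorem sup_mem_F_iff : x ⊔ y ∈ IF.F ↔ x ∈ IF.F ∨ y ∈ IF.F := by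
  simp only [mem_F_iff_notMem_I, Order.Ideal.sup_mem_iff, not_and_or]

theorem bot_notMem_F [OrderBot P] : (⊥ : P) ∉ IF.F :=
  IF.mem_F_iff_notMem_I.not_left.mpr IF.I.bot_mem

end Lattice

theorem himp_mem_F_iff {P : Type*} [HeytingAlgebra P] (IF : PrimePair P) {c : P} (y : P)
    (hc : c ⊔ cᶜ = ⊤) : c ⇨ y ∈ IF.F ↔ (c ∈ IF.F → y ∈ IF.F) := by
  refine ⟨fun h hcF => IF.F.mem_of_le himp_inf_le (PFilter.inf_mem h hcF), fun h => ?_⟩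
  rcases IF.sup_mem_F_iff.mp (hc ▸ PFilter.top_mem) with hcF | hcF
  · exact IF.F.mem_of_le le_himp (h hcF)
  · exact IF.F.mem_of_le compl_le_himp hcF

end Order.Ideal.PrimePair

namespace HTAlgebra

variable {A : Type*} [HeytingAlgebra A] (H : HTAlgebra A)

theorem S_zero_le (x : A) : H.S 0 x ≤ x :=
  sup_eq_right.mp (H.S1_sup_self x)

theorem S_zero_le_S_one (x : A) : H.S 0 x ≤ H.S 1 x := by
  have h := congrArg (H.S 1) (H.S1_sup_self x)
  rw [H.S_sup, H.S_S] at h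
  exact sup_eq_right.mp h

theorem S_bot (i : Fin 2) : H.S i ⊥ = ⊥ := by
  have h0 : H.S 0 (⊥ : A) = ⊥ := le_bot_iff.mp (H.S_zero_le ⊥)
  rw [← h0, H.S_S, h0]

theorem S_sup_compl (i : Fin 2) (x : A) : H.S i x ⊔ (H.S i x)ᶜ = ⊤ := by
  rw [← H.S_S 0 i x]
  exact H.S1_lem _

end HTAlgebra

/-- The element of `BT` true "here" iff `here` and "there" iff `there`. -/
def htValue (here there : Bool) : Fin 3 :=
  if here then 2 else if there then 1 else 0

section htValue

variable (u v u' v' : Bool)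

theorem htValue_inf : (u → v) → (u' → v') →
    htValue (u && u') (v && v') = htValue u v ⊓ htValue u' v' := by
  revert u v u' v'; decide

theorem htValue_sup : (u → v) → (u' → v') →
    htValue (u || u') (v || v') = htValue u v ⊔ htValue u' v' := by
  revert u v u' v'; decide

theorem htValue_himp : (u → v) → (u' → v') →
    htValue ((!u || u') && (!v || v')) (!v || v') = htValue u v ⇨ htValue u' v' := by
  revert u v u' v'; decide

theorem htValue_S_zero : (u → v) → htValue u u = BT.S 0 (htValue u v) := by
  revert u v; decide

theorem htValue_S_one : (u → v) → htValue v v = BT.S 1 (htValue u v) := by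
  revert u v; decide

theorem htValue_false_ne_top : htValue false v ≠ ⊤ := by
  revert v; decide

end htValue

namespace HTAlgebra

open scoped Classical

variable {A : Type*} [HeytingAlgebra A] (H : HTAlgebra A) (IF : Ideal.PrimePair A)

noncomputable def level (i : Fin 2) (x : A) : Bool :=
  decide (H.S i x ∈ IF.F)

theorem level_eq_true_iff {i : Fin 2} {x : A} : H.level IF i x = true ↔ H.S i x ∈ IF.F :=
  decide_eq_true_iff

theorem level_zero_imp_one (x : A) : H.level IF 0 x → H.level IF 1 x := by
  simp only [level_eq_true_iff]
  exact IF.F.mem_of_le (H.S_zero_le_S_one x)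

theorem level_inf (i : Fin 2) (x y : A) :
    H.level IF i (x ⊓ y) = (H.level IF i x && H.level IF i y) := by
  rw [Bool.eq_iff_iff, Bool.and_eq_true, level_eq_true_iff, level_eq_true_iff, level_eq_true_iff,
    H.S_inf, PFilter.inf_mem_iff]

theorem level_sup (i : Fin 2) (x y : A) :
    H.level IF i (x ⊔ y) = (H.level IF i x || H.level IF i y) := by
  rw [Bool.eq_iff_iff, Bool.or_eq_true, level_eq_true_iff, level_eq_true_iff, level_eq_true_iff,
    H.S_sup, IF.sup_mem_F_iff]

theorem level_S (i j : Fin 2) (x : A) : H.level IF i (H.S j x) = H.level IF j x := by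
  rw [level, H.S_S, level]

theorem level_bot (i : Fin 2) : H.level IF i ⊥ = false := by
  simp only [level, H.S_bot, IF.bot_notMem_F, decide_false]

theorem himp_S_mem_F_iff (i : Fin 2) (x y : A) :
    H.S i x ⇨ y ∈ IF.F ↔ (H.level IF i x → y ∈ IF.F) := by
  rw [level_eq_true_iff, IF.himp_mem_F_iff _ (H.S_sup_compl i x)]

theorem level_one_himp (x y : A) :
    H.level IF 1 (x ⇨ y) = (!H.level IF 1 x || H.level IF 1 y) := by
  rw [Bool.eq_iff_iff, level_eq_true_iff, H.S2_himp, H.himp_S_mem_F_iff, ← level_eq_true_iff]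
  cases H.level IF 1 x <;> simp

theorem level_zero_himp (x y : A) :
    H.level IF 0 (x ⇨ y) =
      ((!H.level IF 0 x || H.level IF 0 y) && (!H.level IF 1 x || H.level IF 1 y)) := by
  rw [Bool.eq_iff_iff, level_eq_true_iff, H.S1_himp, PFilter.inf_mem_iff, H.himp_S_mem_F_iff,
    H.himp_S_mem_F_iff, ← level_eq_true_iff, ← level_eq_true_iff]
  cases H.level IF 0 x <;> cases H.level IF 1 x <;> simp

noncomputable def toBT : HeytingHom A (Fin 3) where
  toFun x := htValue (H.level IF 0 x) (H.level IF 1 x)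
  map_sup' x y := by
    simp only [level_sup]
    exact htValue_sup _ _ _ _ (H.level_zero_imp_one IF x) (H.level_zero_imp_one IF y)
  map_inf' x y := by
    simp only [level_inf]
    exact htValue_inf _ _ _ _ (H.level_zero_imp_one IF x) (H.level_zero_imp_one IF y)
  map_bot' := by
    simp only [level_bot]
    rfl
  map_himp' x y := by
    simp only [level_zero_himp, level_one_himp]
    exact htValue_himp _ _ _ _ (H.level_zero_imp_one IF x) (H.level_zero_imp_one IF y)

theorem toBT_apply (x : A) : H.toBT IF x = htValue (H.level IF 0 x) (H.level IF 1 x) := rfl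

theorem toBT_S (i : Fin 2) (x : A) : H.toBT IF (H.S i x) = BT.S i (H.toBT IF x) := by
  simp only [toBT_apply, level_S]
  fin_cases i
  · exact htValue_S_zero _ _ (H.level_zero_imp_one IF x)
  · exact htValue_S_one _ _ (H.level_zero_imp_one IF x)

theorem toBT_ne_top {a : A} (ha : H.S 0 a ∈ IF.I) : H.toBT IF a ≠ ⊤ := by
  have : H.level IF 0 a = false := by
    rwa [Bool.eq_false_iff, Ne, level_eq_true_iff, IF.mem_F_iff_notMem_I, not_not]
  rw [toBT_apply, this]
  exact htValue_false_ne_top _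

theorem exists_primePair_S_zero_mem {a : A} (ha : a ≠ ⊤) :
    ∃ IF : Ideal.PrimePair A, H.S 0 a ∈ IF.I := by
  have hS : ¬ ⊤ ≤ H.S 0 a := fun h => ha (top_le_iff.mp (h.trans (H.S_zero_le a)))
  obtain ⟨J, hJ, hle, -⟩ := DistribLattice.prime_ideal_of_disjoint_filter_ideal
    (F := PFilter.principal ⊤) (I := Ideal.principal (H.S 0 a))
    (Set.disjoint_left.mpr fun x hxF hxI => hS (le_trans hxF hxI))
  exact ⟨hJ.toPrimePair, hle Ideal.mem_principal_self⟩

end HTAlgebra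

theorem IsHom.comp {A B : Type*} [HeytingAlgebra A] [HeytingAlgebra B] {H : HTAlgebra A}
    {K : HTAlgebra B} {h : Fml → A} (hh : IsHom H h) (f : HeytingHom A B)
    (hf : ∀ i x, f (H.S i x) = K.S i (f x)) : IsHom K (f ∘ h) := by
  obtain ⟨h_and, h_or, h_imp, h_neg, h_S⟩ := hh
  exact ⟨fun α β => by simp [h_and], fun α β => by simp [h_or], fun α β => by simp [h_imp],
    fun α => by simp [h_neg], fun i α => by simp [h_S, hf]⟩

/-- Theorem 6.1: for a finite set Γ of formulas, α is an algebraic consequence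
of Γ iff Γ ⊨_BT α, i.e. every homomorphism into the finite HT-algebra BT making
all of Γ true makes α true.  (Hence the consequence relation is decidable.) -/
theorem stmt_18 (Γ : Finset Fml) (α : Fml) :
    AlgConsequence (↑Γ) α ↔
      (∀ h : Fml → Fin 3, IsHom BT h → (∀ γ ∈ Γ, h γ = ⊤) → h α = ⊤) := by
  refine ⟨fun hAlg h hh hΓ => hAlg _ _ BT h hh (by simpa using hΓ), ?_⟩
  intro hBT A _ H h hh hΓ
  by_contra hα
  obtain ⟨IF, hIF⟩ := H.exists_primePair_S_zero_mem hα
  refine H.toBT_ne_top IF hIF (hBT _ (hh.comp (H.toBT IF) (H.toBT_S IF)) fun γ hγ => ?_)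
  simp [hΓ γ hγ]
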